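/- Let h : ℝⁿ → ℝⁿ and let F̄ ∈ ℝ^{n×n} be a nonnegative matrix such that |h(c₁) − h(c₂)| ≤ F̄ |c₁ − c₂| entrywise for all c₁, c₂ ∈ ℝⁿ. Let W₁ ∈ ℝ^{n'×n'}, W₂ ∈ ℝ^{n'×n}, W₃ ∈ ℝ^{n×n'}, set A := |W₁| + |W₂| F̄ |W₃| and ρ := ρ(A), and assume ρ < 1 and that there exists α ∈ ℝ^{n'} with strictly positive entries such that αᵀ A = ρ αᵀ. Fix w̄ ∈ ℝⁿ, c ∈ ℝ^{n'}, m ∈ ((0,∞])^{n'}, and τ > 0, and let x* be the unique point with x* = [W₁ x* + W₂ h(W₃ x* + w̄) + c]₀^m. Then every differentiable x : [0,∞) → ℝ^{n'} satisfying τ ẋ(t) = −x(t) + [W₁ x(t) + W₂ h(W₃ x(t) + w̄) + c]₀^m for all t ≥ 0 obeys αᵀ|x(t) − x*| ≤ αᵀ|x(0) − x*| · e^{−(1−ρ) t/τ} for all t ≥ 0; in particular the dynamics is globally exponentially stable toward x*. -/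

import Mathlib

open Matrix

/-- Saturation `[x]₀^m = min{max{x,0}, m}` where the upper bound `m ∈ (0,∞]` is an
extended nonnegative real (`m = ⊤` means no upper saturation). -/
noncomputable def clampE (m : ENNReal) (x : ℝ) : ℝ :=
  if m = ⊤ then max x 0 else min (max x 0) m.toReal

/-- Spectral radius of a real matrix: the largest modulus of its complex eigenvalues. -/
noncomputable def specRad {n : ℕ} (A : Matrix (Fin n) (Fin n) ℝ) : ℝ :=
  (spectralRadius ℂ (A.map (Complex.ofReal ·))).toReal

/-- The comparison matrix `|W₁| + |W₂| F̄ |W₃|`, with `|·|` the entrywise absolute value. -/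
noncomputable def gainMat {n n' : ℕ} (W₁ : Matrix (Fin n') (Fin n') ℝ)
    (W₂ : Matrix (Fin n') (Fin n) ℝ) (W₃ : Matrix (Fin n) (Fin n') ℝ)
    (Fbar : Matrix (Fin n) (Fin n) ℝ) : Matrix (Fin n') (Fin n') ℝ :=
  W₁.map (fun a => |a|) + W₂.map (fun a => |a|) * Fbar * W₃.map (fun a => |a|)

/-- The map `T(x) = [W₁ x + W₂ h(W₃ x + w̄) + c]₀^m`. -/
noncomputable def Tmap {n n' : ℕ} (W₁ : Matrix (Fin n') (Fin n') ℝ)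
    (W₂ : Matrix (Fin n') (Fin n) ℝ) (W₃ : Matrix (Fin n) (Fin n') ℝ)
    (h : (Fin n → ℝ) → (Fin n → ℝ)) (wbar : Fin n → ℝ) (c : Fin n' → ℝ)
    (m : Fin n' → ENNReal) (x : Fin n' → ℝ) : Fin n' → ℝ :=
  fun i => clampE (m i) ((W₁.mulVec x + W₂.mulVec (h (W₃.mulVec x + wbar)) + c) i)

open Filter Topology Set

/-!
In the weighted norm `‖v‖_α = αᵀ|v|` the map `T(x) = [W₁ x + W₂ h(W₃ x + w̄) + c]₀^m` is a
`ρ`-contraction: saturation is 1-Lipschitz, so `|T u - T v| ≤ A |u - v|` entrywise, and pairing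
with the left eigenvector `α` gives the factor `ρ`. For the dynamics `τ ẋ = -x + T x`, an Euler
step of length `s` writes `x(t + s) - x*` as the convex combination
`(1 - s/τ)(x(t) - x*) + (s/τ)(T x(t) - x*)` up to `o(s)`, so `g(t) = ‖x(t) - x*‖_α` has upper
right Dini derivative at most `-(1 - ρ) g(t) / τ`, and Grönwall's inequality gives the bound.
-/

lemma abs_clampE_sub_clampE_le (m : ENNReal) (a b : ℝ) :
    |clampE m a - clampE m b| ≤ |a - b| := by
  unfold clampE
  split_ifs
  · exact abs_max_sub_max_le_abs a b 0
  · refine (abs_min_sub_min_le_max _ _ _ _).trans ?_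
    rw [sub_self, abs_zero]
    exact max_le (abs_max_sub_max_le_abs a b 0) (abs_nonneg _)

namespace Matrix

variable {l m R : Type*} [Fintype m]

lemma abs_mulVec_le [CommRing R] [LinearOrder R] [IsStrictOrderedRing R]
    (M : Matrix l m R) (v : m → R) : |M *ᵥ v| ≤ M.map abs *ᵥ |v| := fun i =>
  (Finset.abs_sum_le_sum_abs _ _).trans_eq (by simp [abs_mul, mulVec, dotProduct])

lemma mulVec_le_mulVec_of_nonneg [Semiring R] [PartialOrder R] [IsOrderedRing R]
    {M : Matrix l m R} (hM : ∀ i j, 0 ≤ M i j) {v w : m → R} (hvw : v ≤ w) :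
    M *ᵥ v ≤ M *ᵥ w := fun i =>
  dotProduct_le_dotProduct_of_nonneg_left hvw (hM i)

lemma dotProduct_le_mul_dotProduct_of_vecMul_eq_smul [CommRing R] [PartialOrder R]
    [IsOrderedRing R] {A : Matrix m m R} {α v w : m → R} {ρ : R} (hα : 0 ≤ α)
    (heig : α ᵥ* A = ρ • α) (hwv : w ≤ A *ᵥ v) : α ⬝ᵥ w ≤ ρ * (α ⬝ᵥ v) :=
  calc α ⬝ᵥ w ≤ α ⬝ᵥ (A *ᵥ v) := dotProduct_le_dotProduct_of_nonneg_left hwv hα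
    _ = ρ * (α ⬝ᵥ v) := by rw [dotProduct_mulVec, heig, smul_dotProduct, smul_eq_mul]

end Matrix

section Tmap

variable {n n' : ℕ} {h : (Fin n → ℝ) → (Fin n → ℝ)} {Fbar : Matrix (Fin n) (Fin n) ℝ}
  (W₁ : Matrix (Fin n') (Fin n') ℝ) (W₂ : Matrix (Fin n') (Fin n) ℝ)
  (W₃ : Matrix (Fin n) (Fin n') ℝ) (wbar : Fin n → ℝ) (c : Fin n' → ℝ) (m : Fin n' → ENNReal)

lemma abs_Tmap_sub_Tmap_le (hFnn : ∀ i j, 0 ≤ Fbar i j)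
    (hFlip : ∀ c₁ c₂ : Fin n → ℝ, |h c₁ - h c₂| ≤ Fbar *ᵥ |c₁ - c₂|) (u v : Fin n' → ℝ) :
    |Tmap W₁ W₂ W₃ h wbar c m u - Tmap W₁ W₂ W₃ h wbar c m v|
      ≤ gainMat W₁ W₂ W₃ Fbar *ᵥ |u - v| := by
  have hh : |h (W₃ *ᵥ u + wbar) - h (W₃ *ᵥ v + wbar)| ≤ Fbar *ᵥ (W₃.map abs *ᵥ |u - v|) :=
    (hFlip _ _).trans <| mulVec_le_mulVec_of_nonneg hFnn <| by
      simpa only [add_sub_add_right_eq_sub, ← mulVec_sub] using abs_mulVec_le W₃ (u - v)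
  have hpre : |(W₁ *ᵥ u + W₂ *ᵥ h (W₃ *ᵥ u + wbar) + c)
      - (W₁ *ᵥ v + W₂ *ᵥ h (W₃ *ᵥ v + wbar) + c)| ≤ gainMat W₁ W₂ W₃ Fbar *ᵥ |u - v| := by
    rw [add_sub_add_right_eq_sub, add_sub_add_comm, ← mulVec_sub, ← mulVec_sub, gainMat,
      add_mulVec, ← mulVec_mulVec, ← mulVec_mulVec]
    exact (abs_add_le _ _).trans <| add_le_add (abs_mulVec_le _ _) <| (abs_mulVec_le _ _).trans <|
      mulVec_le_mulVec_of_nonneg (fun _ _ => abs_nonneg _) hh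
  exact fun i => (abs_clampE_sub_clampE_le (m i) _ _).trans (hpre i)

end Tmap

section Relaxation

variable {E : Type*} [NormedAddCommGroup E] [NormedSpace ℝ E] (p : Seminorm ℝ E)
  {f : E → E} {xstar : E} {ρ τ : ℝ}

lemma Seminorm.le_of_relaxation_step (hf : ∀ u, p (f u - xstar) ≤ ρ * p (u - xstar))
    {y z : E} {s : ℝ} (hs : 0 < s) (hsτ : s ≤ τ) :
    p (z - xstar) ≤ (1 - (1 - ρ) * s / τ) * p (y - xstar)
      + s * p (s⁻¹ • (z - y) - τ⁻¹ • (-y + f y)) := by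
  have hτ : 0 < τ := hs.trans_le hsτ
  have hsτ' : s / τ ≤ 1 := (div_le_one hτ).2 hsτ
  have hsplit : z - xstar = (1 - s / τ) • (y - xstar) + (s / τ) • (f y - xstar)
      + s • (s⁻¹ • (z - y) - τ⁻¹ • (-y + f y)) := by
    rw [smul_sub s, smul_smul, mul_inv_cancel₀ hs.ne', one_smul, smul_smul, ← div_eq_mul_inv]
    module
  calc p (z - xstar)
      ≤ (1 - s / τ) * p (y - xstar) + s / τ * p (f y - xstar)
          + s * p (s⁻¹ • (z - y) - τ⁻¹ • (-y + f y)) := by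
        rw [hsplit]
        refine (map_add_le_add p _ _).trans (add_le_add ((map_add_le_add p _ _).trans ?_) ?_)
          <;> simp only [map_smul_eq_mul, Real.norm_eq_abs]
        · rw [abs_of_nonneg (sub_nonneg.2 hsτ'), abs_of_nonneg (by positivity)]
        · rw [abs_of_pos hs]
    _ ≤ (1 - s / τ) * p (y - xstar) + s / τ * (ρ * p (y - xstar))
          + s * p (s⁻¹ • (z - y) - τ⁻¹ • (-y + f y)) := by
        gcongr
        exact hf y
    _ = _ := by ring

lemma Seminorm.eventually_slope_lt_of_relaxation (hp : Continuous p)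
    (hf : ∀ u, p (f u - xstar) ≤ ρ * p (u - xstar)) (hτ : 0 < τ) {x : ℝ → E} {t : ℝ}
    (hx : HasDerivWithinAt x (τ⁻¹ • (-(x t) + f (x t))) (Ioi t) t) {r : ℝ}
    (hr : -((1 - ρ) / τ) * p (x t - xstar) < r) :
    ∀ᶠ z in 𝓝[>] t, (z - t)⁻¹ * (p (x z - xstar) - p (x t - xstar)) < r := by
  set d := τ⁻¹ • (-(x t) + f (x t))
  have herr : Tendsto (fun z => p (slope x t z - d)) (𝓝[>] t) (𝓝 0) := by
    have hslope := (hasDerivWithinAt_iff_tendsto_slope' (lt_irrefl t)).1 hx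
    exact ((hp.comp (continuous_sub_right d)).tendsto' d 0 (by simp)).comp hslope
  have hgap : 0 < r + (1 - ρ) / τ * p (x t - xstar) := by linarith
  filter_upwards [herr.eventually_lt_const hgap, Ioo_mem_nhdsGT (show t < t + τ by linarith)]
    with z hz ⟨htz, hzτ⟩
  have hs : 0 < z - t := sub_pos.2 htz
  have hstep := p.le_of_relaxation_step hf (τ := τ) (y := x t) (z := x z) hs (by linarith)
  rw [← slope_def_module] at hstep
  rw [inv_mul_lt_iff₀ hs]
  calc p (x z - xstar) - p (x t - xstar)
      ≤ (z - t) * (-((1 - ρ) / τ) * p (x t - xstar) + p (slope x t z - d)) := by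
        linear_combination hstep
    _ < (z - t) * r := by gcongr; linarith

theorem Seminorm.le_mul_exp_of_relaxation (hp : Continuous p)
    (hf : ∀ u, p (f u - xstar) ≤ ρ * p (u - xstar)) (hτ : 0 < τ) {x : ℝ → E}
    (hx : ∀ t ∈ Ici (0 : ℝ), HasDerivWithinAt x (τ⁻¹ • (-(x t) + f (x t))) (Ici 0) t)
    {t : ℝ} (ht : 0 ≤ t) :
    p (x t - xstar) ≤ p (x 0 - xstar) * Real.exp (-(1 - ρ) * t / τ) := by
  have hcont : ContinuousOn (fun s => p (x s - xstar)) (Icc 0 t) := fun s hs =>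
    hp.continuousAt.comp_continuousWithinAt <|
      ((hx s hs.1).continuousWithinAt.mono Icc_subset_Ici_self).sub continuousWithinAt_const
  have hdini : ∀ s ∈ Ico 0 t, ∀ r, -((1 - ρ) / τ) * p (x s - xstar) < r →
      ∃ᶠ z in 𝓝[>] s, (z - s)⁻¹ * (p (x z - xstar) - p (x s - xstar)) < r := fun s hs r hr =>
    (p.eventually_slope_lt_of_relaxation hp hf hτ
      ((hx s hs.1).mono (Ioi_subset_Ici hs.1)) hr).frequently
  have := le_gronwallBound_of_liminf_deriv_right_le hcont hdini le_rfl
    (fun s _ => (add_zero _).ge) t ⟨ht, le_rfl⟩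
  rw [gronwallBound_ε0, sub_zero] at this
  convert this using 3
  ring

end Relaxation

section WeightedNorm

variable {ι : Type*} [Fintype ι]

noncomputable def weightedL1Seminorm (α : ι → ℝ) (hα : 0 ≤ α) : Seminorm ℝ (ι → ℝ) :=
  Seminorm.of (fun v => α ⬝ᵥ |v|)
    (fun u v => (dotProduct_le_dotProduct_of_nonneg_left (abs_add_le u v) hα).trans_eq
      (dotProduct_add _ _ _))
    (fun a v => by
      rw [show |a • v| = |a| • |v| from funext fun i => abs_mul a (v i), dotProduct_smul,
        smul_eq_mul, Real.norm_eq_abs])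

lemma continuous_weightedL1Seminorm (α : ι → ℝ) (hα : 0 ≤ α) :
    Continuous (weightedL1Seminorm α hα) :=
  continuous_const.dotProduct <| continuous_pi fun i => (continuous_apply i).abs

end WeightedNorm

theorem clamp_dynamics_GES_general
    {n n' : ℕ}
    (h : (Fin n → ℝ) → (Fin n → ℝ))
    (Fbar : Matrix (Fin n) (Fin n) ℝ) (hFnn : ∀ i j, 0 ≤ Fbar i j)
    (hFlip : ∀ (c₁ c₂ : Fin n → ℝ) (i : Fin n),
      |h c₁ i - h c₂ i| ≤ Fbar.mulVec (fun j => |c₁ j - c₂ j|) i)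
    (W₁ : Matrix (Fin n') (Fin n') ℝ) (W₂ : Matrix (Fin n') (Fin n) ℝ)
    (W₃ : Matrix (Fin n) (Fin n') ℝ)
    (ρ : ℝ)
    (α : Fin n' → ℝ) (hα : ∀ i, 0 < α i)
    (heig : Matrix.vecMul α (gainMat W₁ W₂ W₃ Fbar) = ρ • α)
    (wbar : Fin n → ℝ) (c : Fin n' → ℝ)
    (m : Fin n' → ENNReal)
    (τ : ℝ) (hτ : 0 < τ)
    (xstar : Fin n' → ℝ)
    (hstar : xstar = Tmap W₁ W₂ W₃ h wbar c m xstar)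
    (x : ℝ → (Fin n' → ℝ))
    (hx : ∀ t ∈ Set.Ici (0:ℝ),
      HasDerivWithinAt x (τ⁻¹ • (-(x t) + Tmap W₁ W₂ W₃ h wbar c m (x t)))
        (Set.Ici (0:ℝ)) t) :
    ∀ t ≥ (0:ℝ),
      ∑ i, α i * |x t i - xstar i|
        ≤ (∑ i, α i * |x 0 i - xstar i|) * Real.exp (-(1 - ρ) * t / τ) := by
  intro t ht
  have hα' : 0 ≤ α := fun i => (hα i).le
  have hcontr : ∀ u, weightedL1Seminorm α hα' (Tmap W₁ W₂ W₃ h wbar c m u - xstar)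
      ≤ ρ * weightedL1Seminorm α hα' (u - xstar) := fun u => by
    have := dotProduct_le_mul_dotProduct_of_vecMul_eq_smul hα' heig
      (abs_Tmap_sub_Tmap_le W₁ W₂ W₃ wbar c m hFnn hFlip u xstar)
    rwa [← hstar] at this
  exact (weightedL1Seminorm α hα').le_mul_exp_of_relaxation
    (continuous_weightedL1Seminorm α hα') hcontr hτ hx ht

/-- Under the entrywise Lipschitz bound `|h(c₁) − h(c₂)| ≤ F̄|c₁ − c₂|`,
with `A = |W₁| + |W₂| F̄ |W₃|`, `ρ = ρ(A) < 1` and a positive left eigenvector `α` of `A`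
for `ρ`, every solution of `τ ẋ = −x + [W₁ x + W₂ h(W₃ x + w̄) + c]₀^m` on `[0,∞)` satisfies
`αᵀ|x(t) − x*| ≤ αᵀ|x(0) − x*| e^{−(1−ρ)t/τ}`, where `x*` is the unique fixed point:
global exponential stability toward `x*`. -/
theorem clamp_dynamics_GES
    {n n' : ℕ}
    (h : (Fin n → ℝ) → (Fin n → ℝ))
    (Fbar : Matrix (Fin n) (Fin n) ℝ) (hFnn : ∀ i j, 0 ≤ Fbar i j)
    (hFlip : ∀ (c₁ c₂ : Fin n → ℝ) (i : Fin n),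
      |h c₁ i - h c₂ i| ≤ Fbar.mulVec (fun j => |c₁ j - c₂ j|) i)
    (W₁ : Matrix (Fin n') (Fin n') ℝ) (W₂ : Matrix (Fin n') (Fin n) ℝ)
    (W₃ : Matrix (Fin n) (Fin n') ℝ)
    (ρ : ℝ) (hρ : ρ = specRad (gainMat W₁ W₂ W₃ Fbar)) (hρ1 : ρ < 1)
    (α : Fin n' → ℝ) (hα : ∀ i, 0 < α i)
    (heig : Matrix.vecMul α (gainMat W₁ W₂ W₃ Fbar) = ρ • α)
    (wbar : Fin n → ℝ) (c : Fin n' → ℝ)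
    (m : Fin n' → ENNReal) (hm : ∀ i, 0 < m i)
    (τ : ℝ) (hτ : 0 < τ)
    (xstar : Fin n' → ℝ)
    (hstar : xstar = Tmap W₁ W₂ W₃ h wbar c m xstar)
    (hstaru : ∀ y : Fin n' → ℝ, y = Tmap W₁ W₂ W₃ h wbar c m y → y = xstar)
    (x : ℝ → (Fin n' → ℝ))
    (hx : ∀ t ∈ Set.Ici (0:ℝ),
      HasDerivWithinAt x (τ⁻¹ • (-(x t) + Tmap W₁ W₂ W₃ h wbar c m (x t)))
        (Set.Ici (0:ℝ)) t) :
    ∀ t ≥ (0:ℝ),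
      ∑ i, α i * |x t i - xstar i|
        ≤ (∑ i, α i * |x 0 i - xstar i|) * Real.exp (-(1 - ρ) * t / τ) :=
  clamp_dynamics_GES_general h Fbar hFnn hFlip W₁ W₂ W₃ ρ α hα heig wbar c m τ hτ xstar hstar x hx
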